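/- The Hermitian adjacency matrix of the mixed complete tripartite graph C₃→(t₁, t₂, t₃) has exactly one positive eigenvalue. -/

import Mathlib

/-- The Hermitian adjacency matrix of the mixed complete tripartite graph
`C₃→(t₁, t₂, t₃)`: vertex classes `A`, `B`, `C` of sizes `t₁`, `t₂`, `t₃`, with all
arcs directed from `A` to `B`, from `B` to `C`, and from `C` to `A`. -/
def triAdj (t₁ t₂ t₃ : ℕ) :
    Matrix (Fin t₁ ⊕ Fin t₂ ⊕ Fin t₃) (Fin t₁ ⊕ Fin t₂ ⊕ Fin t₃) ℂ :=
  fun u w => match u, w with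
  | .inl _, .inr (.inl _) => Complex.I
  | .inr (.inl _), .inl _ => -Complex.I
  | .inr (.inl _), .inr (.inr _) => Complex.I
  | .inr (.inr _), .inr (.inl _) => -Complex.I
  | .inr (.inr _), .inl _ => Complex.I
  | .inl _, .inr (.inr _) => -Complex.I
  | _, _ => 0

/-- The positive inertia index of a Hermitian matrix. -/
noncomputable def posIdx {n : Type*} [Fintype n] [DecidableEq n] {M : Matrix n n ℂ}
    (hM : M.IsHermitian) : ℕ :=
  Fintype.card {i // 0 < hM.eigenvalues i}

/-- Left factor in a rank-2 factorization of `triAdj`. -/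
def triL (t₁ t₂ t₃ : ℕ) : Matrix (Fin t₁ ⊕ Fin t₂ ⊕ Fin t₃) (Fin 2) ℂ :=
  fun u => match u with
  | .inl _ => ![1, 0]
  | .inr (.inl _) => ![0, 1]
  | .inr (.inr _) => ![-1, -1]

/-- Right factor in a rank-2 factorization of `triAdj`. -/
def triR (t₁ t₂ t₃ : ℕ) : Matrix (Fin 2) (Fin t₁ ⊕ Fin t₂ ⊕ Fin t₃) ℂ :=
  fun k w => match k, w with
  | 0, .inl _ => 0
  | 0, .inr (.inl _) => Complex.I
  | 0, .inr (.inr _) => -Complex.I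
  | 1, .inl _ => -Complex.I
  | 1, .inr (.inl _) => 0
  | 1, .inr (.inr _) => Complex.I

lemma triAdj_factor (t₁ t₂ t₃ : ℕ) :
    triAdj t₁ t₂ t₃ = triL t₁ t₂ t₃ * triR t₁ t₂ t₃ := by
  ext u w
  rcases u with a | b | c <;> rcases w with a' | b' | c' <;>
    simp [triAdj, triL, triR, Matrix.mul_apply, Fin.sum_univ_two]

lemma triAdj_rank_le (t₁ t₂ t₃ : ℕ) : (triAdj t₁ t₂ t₃).rank ≤ 2 := by
  rw [triAdj_factor]
  calc (triL t₁ t₂ t₃ * triR t₁ t₂ t₃).rank ≤ (triR t₁ t₂ t₃).rank :=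
        Matrix.rank_mul_le_right _ _
    _ ≤ Fintype.card (Fin 2) := Matrix.rank_le_card_height _
    _ = 2 := by simp

lemma triAdj_trace (t₁ t₂ t₃ : ℕ) : (triAdj t₁ t₂ t₃).trace = 0 := by
  rw [Matrix.trace]
  refine Finset.sum_eq_zero fun u _ => ?_
  rcases u with a | b | c <;> rfl

lemma trace_eq_sum_eigs {n : Type*} [Fintype n] [DecidableEq n] {M : Matrix n n ℂ}
    (hM : M.IsHermitian) : M.trace = ∑ i, (hM.eigenvalues i : ℂ) := by
  conv_lhs => rw [hM.spectral_theorem]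
  rw [Unitary.conjStarAlgAut_apply, Matrix.trace_mul_comm, ← Matrix.mul_assoc]
  rw [(Matrix.mem_unitaryGroup_iff').mp (Matrix.IsHermitian.eigenvectorUnitary hM).2]
  simp [Matrix.trace_diagonal]

/-- The Hermitian adjacency matrix of `C₃→(t₁, t₂, t₃)` has exactly one positive
eigenvalue. -/
theorem triAdj_posIdx (t₁ t₂ t₃ : ℕ) (h₁ : 1 ≤ t₁) (h₂ : 1 ≤ t₂) (h₃ : 1 ≤ t₃)
    (hH : (triAdj t₁ t₂ t₃).IsHermitian) :
    posIdx hH = 1 := by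
  classical
  set e := hH.eigenvalues with he
  -- sum of eigenvalues is zero
  have hsum : ∑ i, e i = 0 := by
    have := trace_eq_sum_eigs hH
    rw [triAdj_trace] at this
    have : ((∑ i, e i : ℝ) : ℂ) = 0 := by
      rw [Complex.ofReal_sum]; exact this.symm
    exact_mod_cast this
  -- the matrix is nonzero
  have hne : triAdj t₁ t₂ t₃ ≠ 0 := by
    intro h
    have := congrFun (congrFun h (Sum.inl ⟨0, h₁⟩)) (Sum.inr (Sum.inl ⟨0, h₂⟩))
    simp [triAdj] at this
  -- number of nonzero eigenvalues = rank ≤ 2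
  have hrank : Fintype.card {i // e i ≠ 0} ≤ 2 := by
    rw [← hH.rank_eq_card_non_zero_eigs]
    exact triAdj_rank_le t₁ t₂ t₃
  -- exists nonzero eigenvalue
  obtain ⟨i0, hi0⟩ : ∃ i, e i ≠ 0 := by
    by_contra h
    push_neg at h
    apply hne
    have hz : (RCLike.ofReal ∘ e : _ → ℂ) = 0 := funext fun i => by simp [h i]
    rw [hH.spectral_theorem, ← he, hz,
      show Matrix.diagonal (0 : (Fin t₁ ⊕ Fin t₂ ⊕ Fin t₃) → ℂ) = 0 from Matrix.diagonal_zero,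
      Unitary.conjStarAlgAut_apply, Matrix.mul_zero, Matrix.zero_mul]
  -- exists positive and negative eigenvalues
  have hpos : ∃ i, 0 < e i := by
    by_contra h
    push_neg at h
    have h0 : e i0 < 0 := lt_of_le_of_ne (h i0) hi0
    have : ∑ i, e i < 0 :=
      Finset.sum_neg' (fun i _ => h i) ⟨i0, Finset.mem_univ _, h0⟩
    linarith [hsum ▸ this]
  have hneg : ∃ i, e i < 0 := by
    by_contra h
    push_neg at h
    rcases hpos with ⟨j, hj⟩
    have : 0 < ∑ i, e i :=
      Finset.sum_pos' (fun i _ => h i) ⟨j, Finset.mem_univ _, hj⟩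
    linarith [hsum ▸ this]
  -- cardinality bookkeeping
  have hsplit : Fintype.card {i // 0 < e i} + Fintype.card {i // e i < 0}
      = Fintype.card {i // e i ≠ 0} := by
    simp only [Fintype.card_subtype]
    rw [← Finset.card_union_of_disjoint]
    · congr 1
      ext i
      simp only [Finset.mem_union, Finset.mem_filter, Finset.mem_univ, true_and]
      constructor
      · rintro (h | h) <;> [exact ne_of_gt h; exact ne_of_lt h]
      · intro h; rcases h.lt_or_gt with h | h
        · right; exact h
        · left; exact h
    · rw [Finset.disjoint_filter]
      intro i _ h1 h2
      exact absurd h2 (not_lt.mpr h1.le)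
  have hp1 : 1 ≤ Fintype.card {i // 0 < e i} := by
    rcases hpos with ⟨j, hj⟩
    exact Fintype.card_pos_iff.mpr ⟨⟨j, hj⟩⟩
  have hq1 : 1 ≤ Fintype.card {i // e i < 0} := by
    rcases hneg with ⟨j, hj⟩
    exact Fintype.card_pos_iff.mpr ⟨⟨j, hj⟩⟩
  unfold posIdx
  rw [← he]
  omega
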